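/- arXiv:2203.08506 — 10 statements merged into one kernel-verified Lean document; each statement's English description precedes it below -/
import Mathlib

section
/- Let s and n be positive integers with s ≤ n. Define the s×s rational matrix B by B_{ij} = (2j−1)!·(C(s−i, 2j−1) − C(n+i−1, 2j−1)) for 1 ≤ i, j ≤ s, where C(a,b) denotes the binomial coefficient (equal to 0 when b > a). Define the lower-triangular s×s rational matrix M by M_{ij} = (−1)^{i+j} · C(i−1, j−1) · ∏_{l=j}^{i−1} (n−s+i+l)/(n−s+l) for i ≥ j, and M_{ij} = 0 for i < j. Then the matrix U := M·B is upper triangular (i.e. U_{kl} = 0 whenever k > l), and its diagonal entries are U_{ii} = −(i−1)! · ∏_{l=i}^{2i−1} (n+l−s). -/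
/-!
Index rows and columns from `0` and put `m = n - s`, `t_j = j + (m + 1) / 2`, `c = s + (m - 1) / 2`,
so that `c - t_j = s - 1 - j` and `c + t_j = n + j`. With the monic polynomial
`A_l(x) = (x + c)(x + c - 1)⋯(x + c - 2l)` of degree `2l + 1`, the entries of `B` are
`B_{jl} = A_l(-t_j) - A_l(t_j)`, an odd function of `t_j`.

Row `k` of `M`, multiplied by `t_j`, is `k! (m+k+1)⋯(m+2k+1) / 2` times the Lagrange weight
`1 / ∏_{i ≠ j} (t_j² - t_i²)` of the nodes `t_0², …, t_k²`. These weights send `x^p` to `0` for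
`p < k` and `x^k` to `1`, so `∑_j M_{kj} t_j^{2p+1} = δ_{pk} k! (m+k+1)⋯(m+2k+1) / 2` for `p ≤ k`.
Pairing row `k` with the odd polynomial `A_l(-x) - A_l(x)` of degree `2l + 1 ≤ 2k + 1` therefore
only sees its coefficient of `x^{2k+1}`, which is `0` for `l < k` and `-2` for `l = k`.
-/

open Polynomial Finset
open scoped Nat

namespace Lagrange

variable {F ι : Type*} [Field F] [DecidableEq ι]

theorem sum_pow_div_prod_sub {s : Finset ι} {v : ι → F} (hvs : Set.InjOn v s) {p : ℕ}
    (hp : p < #s) :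
    ∑ i ∈ s, v i ^ p / ∏ j ∈ s.erase i, (v i - v j) = if p = #s - 1 then 1 else 0 := by
  have hdeg : ((X : F[X]) ^ p).degree < #s := by rw [degree_X_pow]; exact_mod_cast hp
  simpa [coeff_X_pow, eq_comm] using (coeff_eq_sum hvs hdeg).symm

end Lagrange

section OddMoments

variable {R ι : Type*} [CommRing R] (s : Finset ι) (μ t : ι → R) {k : ℕ} {C : R}

theorem sum_mul_neg_pow_sub_pow
    (hμ : ∀ p ≤ k, ∑ j ∈ s, μ j * t j ^ (2 * p + 1) = if p = k then C else 0)
    {r : ℕ} (hr : r ≤ 2 * k + 1) :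
    ∑ j ∈ s, μ j * ((-t j) ^ r - t j ^ r) = if r = 2 * k + 1 then -2 * C else 0 := by
  rcases r.even_or_odd with hev | ⟨p, rfl⟩
  · rw [if_neg (by rintro rfl; exact Nat.not_even_two_mul_add_one k hev)]
    simp [hev.neg_pow]
  · have hodd : Odd (2 * p + 1) := odd_two_mul_add_one p
    have hterm : ∀ j ∈ s, μ j * ((-t j) ^ (2 * p + 1) - t j ^ (2 * p + 1))
        = -2 * (μ j * t j ^ (2 * p + 1)) := fun j _ => by rw [hodd.neg_pow]; ring
    rw [sum_congr rfl hterm, ← mul_sum, hμ p (by omega)]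
    simp only [Nat.add_right_cancel_iff, Nat.mul_left_cancel_iff two_pos]
    split_ifs <;> ring

theorem sum_mul_eval_neg_sub_eval
    (hμ : ∀ p ≤ k, ∑ j ∈ s, μ j * t j ^ (2 * p + 1) = if p = k then C else 0)
    {A : R[X]} (hA : A.natDegree ≤ 2 * k + 1) :
    ∑ j ∈ s, μ j * (A.eval (-t j) - A.eval (t j)) = -2 * C * A.coeff (2 * k + 1) := by
  have hA' : A.natDegree < 2 * k + 2 := by omega
  simp_rw [eval_eq_sum_range' hA', ← sum_sub_distrib, ← mul_sub, mul_sum]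
  rw [sum_comm]
  simp_rw [mul_left_comm (μ _), ← mul_sum]
  rw [sum_congr rfl fun r hr => by
    rw [sum_mul_neg_pow_sub_pow s μ t hμ (Nat.lt_succ_iff.mp (mem_range.mp hr))]]
  simp [mul_comm]

end OddMoments

theorem Nat.prod_Icc_add_eq_ascFactorial (c a b : ℕ) :
    ∏ l ∈ Icc (a + 1) b, (c + l) = (c + a + 1).ascFactorial (b - a) := by
  rw [Nat.ascFactorial_eq_prod_range, ← Ico_add_one_right_eq_Icc, prod_Ico_eq_prod_range,
    Nat.add_sub_add_right]
  exact prod_congr rfl fun i _ => by ring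

theorem Nat.ascFactorial_mul_ascFactorial_swap (n l k : ℕ) :
    n.ascFactorial l * (n + l).ascFactorial k = n.ascFactorial k * (n + k).ascFactorial l := by
  rw [Nat.ascFactorial_mul_ascFactorial, Nat.ascFactorial_mul_ascFactorial, add_comm]

theorem prod_erase_range_natCast_sub {R : Type*} [CommRing R] {j k : ℕ} (hj : j ≤ k) :
    ∏ i ∈ (range (k + 1)).erase j, ((j : R) - i) = (-1) ^ (k - j) * j ! * (k - j)! := by
  have hsplit : (range (k + 1)).erase j = range j ∪ Ico (j + 1) (k + 1) := by
    ext i; simp only [mem_erase, mem_range, mem_union, mem_Ico]; omega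
  have hdisj : Disjoint (range j) (Ico (j + 1) (k + 1)) :=
    disjoint_left.2 fun i h1 h2 => by simp only [mem_range, mem_Ico] at h1 h2; omega
  have hbelow : ∏ i ∈ range j, ((j : R) - i) = j ! := by
    rw [← prod_range_reflect, ← prod_range_add_one_eq_factorial, Nat.cast_prod]
    exact prod_congr rfl fun i hi => by
      rw [show j - 1 - i = j - (i + 1) by omega, Nat.cast_sub (by simp at hi; omega)]
      push_cast; ring
  have habove : ∏ i ∈ Ico (j + 1) (k + 1), ((j : R) - i) = (-1) ^ (k - j) * (k - j)! := by
    have hterm : ∀ i ∈ range (k - j), (j : R) - (j + 1 + i : ℕ) = -1 * (i + 1 : ℕ) :=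
      fun i _ => by push_cast; ring
    rw [prod_Ico_eq_prod_range, Nat.add_sub_add_right, prod_congr rfl hterm, prod_mul_distrib,
      prod_const, card_range, ← Nat.cast_prod, prod_range_add_one_eq_factorial]
  rw [hsplit, prod_union hdisj, hbelow, habove]
  ring

namespace PartialDWBC

def node (m j : ℕ) : ℚ := j + (m + 1) / 2

theorem node_sq_sub_node_sq (m i j : ℕ) :
    node m j ^ 2 - node m i ^ 2 = (j - i) * (i + j + m + 1) := by
  unfold node; ring

theorem injective_node_sq (m : ℕ) : Function.Injective fun j => node m j ^ 2 := by
  intro i j h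
  have hprod : ((j : ℚ) - i) * (i + j + m + 1) = 0 := by
    rw [← node_sq_sub_node_sq]; exact sub_eq_zero.2 h.symm
  have hpos : (i + j + m + 1 : ℚ) ≠ 0 := by positivity
  exact_mod_cast (sub_eq_zero.1 ((mul_eq_zero.1 hprod).resolve_right hpos)).symm

def lowerEntry (m k j : ℕ) : ℚ :=
  (-1) ^ ((k + 1) + (j + 1)) * k.choose j *
    ∏ l ∈ Icc (j + 1) k, ((m + (k + 1) + l : ℕ) : ℚ) / ((m + l : ℕ) : ℚ)

theorem lowerEntry_eq_zero_of_lt {m k j : ℕ} (h : k < j) : lowerEntry m k j = 0 := by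
  simp [lowerEntry, Nat.choose_eq_zero_of_lt h]

def leadingMoment (m k : ℕ) : ℚ := k ! * (m + k + 1).ascFactorial (k + 1) / 2

theorem lowerEntry_eq {m k j : ℕ} (hj : j ≤ k) :
    lowerEntry m k j = (-1) ^ (k - j) * k.choose j *
      ((m + (k + 1) + j + 1).ascFactorial (k - j) / (m + j + 1).ascFactorial (k - j)) := by
  rw [lowerEntry, prod_div_distrib, ← Nat.cast_prod, ← Nat.cast_prod,
    Nat.prod_Icc_add_eq_ascFactorial, Nat.prod_Icc_add_eq_ascFactorial,
    show (k + 1) + (j + 1) = (k - j) + 2 * (j + 1) by omega, pow_add, pow_mul, neg_one_sq,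
    one_pow, mul_one]

theorem prod_erase_node_sq_sub {m k j : ℕ} (hj : j ≤ k) :
    ∏ i ∈ (range (k + 1)).erase j, (node m j ^ 2 - node m i ^ 2) =
      (-1) ^ (k - j) * j ! * (k - j)! * ((m + j + 1).ascFactorial (k + 1) / (2 * j + m + 1)) := by
  have hj' : j ∈ range (k + 1) := mem_range.2 (by omega)
  have hsum : ∏ i ∈ (range (k + 1)).erase j, ((i : ℚ) + j + m + 1) =
      (m + j + 1).ascFactorial (k + 1) / (2 * j + m + 1) := by
    rw [eq_div_iff (by positivity), mul_comm, Nat.ascFactorial_eq_prod_range, Nat.cast_prod]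
    convert mul_prod_erase (range (k + 1)) (fun i : ℕ => ((i : ℚ) + j + m + 1)) hj' using 1
    · ring
    · exact prod_congr rfl fun i _ => by push_cast; ring
  simp_rw [node_sq_sub_node_sq, prod_mul_distrib, prod_erase_range_natCast_sub hj, hsum]

theorem lowerEntry_mul_node_mul_prod {m k j : ℕ} (hj : j ≤ k) :
    lowerEntry m k j * node m j *
      ∏ i ∈ (range (k + 1)).erase j, (node m j ^ 2 - node m i ^ 2) = leadingMoment m k := by
  have hasc : ((m + (k + 1) + j + 1).ascFactorial (k - j) * (m + j + 1).ascFactorial (k + 1) : ℚ)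
      = (m + k + 1).ascFactorial (k + 1) * (m + j + 1).ascFactorial (k - j) := by
    rw [mul_comm, show m + (k + 1) + j + 1 = m + j + 1 + (k + 1) by ring,
      show m + k + 1 = m + j + 1 + (k - j) by omega]
    norm_cast
    rw [Nat.ascFactorial_mul_ascFactorial_swap, mul_comm]
  have hchoose : (k.choose j * j ! * (k - j)! : ℚ) = k ! := by
    exact_mod_cast Nat.choose_mul_factorial_mul_factorial hj
  have hsign : ((-1 : ℚ) ^ (k - j)) ^ 2 = 1 := by rw [← pow_mul, pow_mul', neg_one_sq, one_pow]
  have hpos : ((m + j + 1).ascFactorial (k - j) : ℚ) ≠ 0 := by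
    exact_mod_cast (Nat.ascFactorial_pos _ _).ne'
  calc lowerEntry m k j * node m j *
        ∏ i ∈ (range (k + 1)).erase j, (node m j ^ 2 - node m i ^ 2)
      = ((-1) ^ (k - j)) ^ 2 * (k.choose j * j ! * (k - j)!) *
          ((m + (k + 1) + j + 1).ascFactorial (k - j) * (m + j + 1).ascFactorial (k + 1)) /
          (2 * (m + j + 1).ascFactorial (k - j)) := by
        rw [lowerEntry_eq hj, prod_erase_node_sq_sub hj, node]
        field_simp
        ring
    _ = leadingMoment m k := by
        rw [hsign, hchoose, hasc, leadingMoment]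
        field_simp

theorem sum_lowerEntry_mul_node_pow {m k p : ℕ} (hp : p ≤ k) :
    ∑ j ∈ range (k + 1), lowerEntry m k j * node m j ^ (2 * p + 1) =
      if p = k then leadingMoment m k else 0 := by
  have hinj : Set.InjOn (fun j => node m j ^ 2) (range (k + 1)) := (injective_node_sq m).injOn
  have hterm : ∀ j ∈ range (k + 1), lowerEntry m k j * node m j ^ (2 * p + 1) =
      leadingMoment m k *
        ((node m j ^ 2) ^ p / ∏ i ∈ (range (k + 1)).erase j, (node m j ^ 2 - node m i ^ 2)) := by
    intro j hj
    have hne : ∏ i ∈ (range (k + 1)).erase j, (node m j ^ 2 - node m i ^ 2) ≠ 0 :=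
      prod_ne_zero_iff.2 fun i hi =>
        sub_ne_zero.2 fun h => ne_of_mem_erase hi (injective_node_sq m h).symm
    rw [← lowerEntry_mul_node_mul_prod (Nat.lt_succ_iff.mp (mem_range.mp hj))]
    field_simp
    ring
  rw [sum_congr rfl hterm, ← mul_sum, Lagrange.sum_pow_div_prod_sub hinj (by simp; omega),
    card_range, Nat.add_sub_cancel]
  split_ifs <;> simp

noncomputable def shiftedDescPochhammer (m s d : ℕ) : ℚ[X] :=
  (descPochhammer ℚ d).comp (X + C (s + ((m : ℚ) - 1) / 2))

theorem natDegree_shiftedDescPochhammer (m s d : ℕ) :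
    (shiftedDescPochhammer m s d).natDegree = d := by
  rw [shiftedDescPochhammer, natDegree_comp, natDegree_X_add_C, descPochhammer_natDegree, mul_one]

theorem coeff_shiftedDescPochhammer_self (m s d : ℕ) :
    (shiftedDescPochhammer m s d).coeff d = 1 := by
  have hmonic : (shiftedDescPochhammer m s d).Monic := (monic_descPochhammer ℚ d).comp_X_add_C _
  simpa only [natDegree_shiftedDescPochhammer] using hmonic.coeff_natDegree

theorem factorial_mul_choose_sub_choose_eq_eval {m s j : ℕ} (hj : j < s) (d : ℕ) :
    (d ! : ℚ) * ((s - (j + 1)).choose d - (s + m + j).choose d) =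
      (shiftedDescPochhammer m s d).eval (-node m j) -
        (shiftedDescPochhammer m s d).eval (node m j) := by
  have hlow : -node m j + (s + ((m : ℚ) - 1) / 2) = ((s - (j + 1) : ℕ) : ℚ) := by
    rw [Nat.cast_sub hj]; push_cast; unfold node; ring
  have hhigh : node m j + (s + ((m : ℚ) - 1) / 2) = ((s + m + j : ℕ) : ℚ) := by
    push_cast; unfold node; ring
  simp only [shiftedDescPochhammer, eval_comp, eval_add, eval_X, eval_C, hlow, hhigh,
    Nat.cast_choose_eq_descPochhammer_div]
  field_simp

theorem sum_lowerEntry_mul_factorial_mul_choose_sub_choose {m s k l : ℕ} (hks : k < s)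
    (hlk : l ≤ k) :
    ∑ j ∈ range (k + 1), lowerEntry m k j *
        ((2 * l + 1)! * ((s - (j + 1)).choose (2 * l + 1) - (s + m + j).choose (2 * l + 1))) =
      if l = k then -2 * leadingMoment m k else 0 := by
  have hA := natDegree_shiftedDescPochhammer m s (2 * l + 1)
  rw [sum_congr rfl fun j hj => by
      rw [factorial_mul_choose_sub_choose_eq_eval (by simp at hj; omega)],
    sum_mul_eval_neg_sub_eval _ _ _ (fun p hp => sum_lowerEntry_mul_node_pow hp) (by omega)]
  split_ifs with hl
  · rw [hl, coeff_shiftedDescPochhammer_self, mul_one]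
  · rw [coeff_eq_zero_of_natDegree_lt (by omega), mul_zero]

end PartialDWBC

theorem lu_decomposition_6V_pDWBC_general (s n : ℕ) (hsn : s ≤ n)
    (B M : Matrix (Fin s) (Fin s) ℚ)
    (hB : ∀ i j : Fin s, B i j =
      (Nat.factorial (2 * (j : ℕ) + 1) : ℚ) *
        ((Nat.choose (s - ((i : ℕ) + 1)) (2 * (j : ℕ) + 1) : ℚ)
          - (Nat.choose (n + (i : ℕ)) (2 * (j : ℕ) + 1) : ℚ)))
    (hM : ∀ i j : Fin s, M i j =
      if (j : ℕ) ≤ (i : ℕ) then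
        (-1 : ℚ) ^ (((i : ℕ) + 1) + ((j : ℕ) + 1)) * (Nat.choose (i : ℕ) (j : ℕ) : ℚ) *
          ∏ l ∈ Finset.Icc ((j : ℕ) + 1) (i : ℕ),
            ((n - s + ((i : ℕ) + 1) + l : ℕ) : ℚ) / ((n - s + l : ℕ) : ℚ)
      else 0) :
    (∀ k l : Fin s, (l : ℕ) < (k : ℕ) → (M * B) k l = 0) ∧
    (∀ i : Fin s, (M * B) i i =
      -(Nat.factorial (i : ℕ) : ℚ) *
        ∏ l ∈ Finset.Icc ((i : ℕ) + 1) (2 * (i : ℕ) + 1), ((n + l - s : ℕ) : ℚ)) := by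
  open PartialDWBC in
  obtain ⟨m, rfl⟩ : ∃ m, n = s + m := ⟨n - s, by omega⟩
  have hM' : ∀ k j : Fin s, M k j = lowerEntry m k j := by
    intro k j
    rw [hM]
    split_ifs with h
    · simp only [lowerEntry, Nat.add_sub_cancel_left]
    · exact (lowerEntry_eq_zero_of_lt (by omega)).symm
  have hU : ∀ k l : Fin s, (l : ℕ) ≤ k →
      (M * B) k l = if (l : ℕ) = k then -2 * leadingMoment m k else 0 := by
    intro k l hlk
    rw [← sum_lowerEntry_mul_factorial_mul_choose_sub_choose k.isLt hlk, Matrix.mul_apply]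
    simp only [hM', hB]
    rw [sum_subset (range_subset_range.2 k.isLt), sum_range]
    intro j _ hj
    rw [lowerEntry_eq_zero_of_lt (by simpa using hj), zero_mul]
  refine ⟨fun k l hlk => by rw [hU k l hlk.le, if_neg hlk.ne], fun i => ?_⟩
  simp only [hU i i le_rfl, if_pos, leadingMoment, add_assoc, Nat.add_sub_cancel_left]
  rw [← Nat.cast_prod, ← add_assoc, Nat.prod_Icc_add_eq_ascFactorial,
    show 2 * (i : ℕ) + 1 - i = i + 1 by omega]
  ring

/-- LU decomposition (Proposition 1) for the 6V model with pDWBC at the free-fermion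
point: with `B` the matrix `B_{ij} = (2j−1)!·(C(s−i,2j−1) − C(n+i−1,2j−1))` and `M = L⁻¹`
the explicit lower-triangular matrix, the product `U = M·B` is upper triangular with
diagonal entries `U_{ii} = −(i−1)!·∏_{l=i}^{2i−1}(n+l−s)`. Indices `1 ≤ i,j ≤ s` are
represented by `i.val + 1`, `j.val + 1` for `i j : Fin s`. -/
theorem lu_decomposition_6V_pDWBC (s n : ℕ) (hs : 0 < s) (hsn : s ≤ n)
    (B M : Matrix (Fin s) (Fin s) ℚ)
    (hB : ∀ i j : Fin s, B i j =
      (Nat.factorial (2 * (j : ℕ) + 1) : ℚ) *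
        ((Nat.choose (s - ((i : ℕ) + 1)) (2 * (j : ℕ) + 1) : ℚ)
          - (Nat.choose (n + (i : ℕ)) (2 * (j : ℕ) + 1) : ℚ)))
    (hM : ∀ i j : Fin s, M i j =
      if (j : ℕ) ≤ (i : ℕ) then
        (-1 : ℚ) ^ (((i : ℕ) + 1) + ((j : ℕ) + 1)) * (Nat.choose (i : ℕ) (j : ℕ) : ℚ) *
          ∏ l ∈ Finset.Icc ((j : ℕ) + 1) (i : ℕ),
            ((n - s + ((i : ℕ) + 1) + l : ℕ) : ℚ) / ((n - s + l : ℕ) : ℚ)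
      else 0) :
    (∀ k l : Fin s, (l : ℕ) < (k : ℕ) → (M * B) k l = 0) ∧
    (∀ i : Fin s, (M * B) i i =
      -(Nat.factorial (i : ℕ) : ℚ) *
        ∏ l ∈ Finset.Icc ((i : ℕ) + 1) (2 * (i : ℕ) + 1), ((n + l - s : ℕ) : ℚ)) :=
  lu_decomposition_6V_pDWBC_general s n hsn B M hB hM
end

section
/- Let N, m, i be integers with m ≥ 0, 1 ≤ i ≤ N and N ≥ m+1. Then, in ℚ, ∑_{k=0}^{m} (−1)^{k+1} · C(N−m−1+k, k) · (C(i−1, m−k) − C(N−i, m−k)) = (−1)^m · (C(i−1, m) − C(N−i, m)). -/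
lemma aux_vdm : ∀ (a n m : ℕ), a ≤ n → m ≤ n →
    ∑ j ∈ Finset.range (m+1), (-1:ℚ)^j * (Nat.choose a j) * (Nat.choose (n-j) (m-j))
      = (Nat.choose (n-a) m : ℚ) := by
  intro a
  induction a with
  | zero =>
    intro n m _ _
    rw [Finset.sum_eq_single 0]
    · simp
    · rintro (_|j) hj hj0
      · exact absurd rfl hj0
      · simp
    · intro h; exact absurd (Finset.mem_range.2 (Nat.succ_pos m)) h
  | succ a ih =>
    intro n m h1 h2
    have ha : a ≤ n - 1 := by omega
    match m with
    | 0 => simp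
    | Nat.succ M =>
      have hM : M ≤ n - 1 := by omega
      have e1 : ∀ i ∈ Finset.range (M+1),
          (-1:ℚ)^(i+1) * (Nat.choose (a+1) (i+1)) * (Nat.choose (n-(i+1)) (M+1-(i+1)))
          = -((-1:ℚ)^i * (Nat.choose a i) * (Nat.choose (n-1-i) (M-i)))
            + (-1:ℚ)^(i+1) * (Nat.choose a (i+1)) * (Nat.choose (n-(i+1)) (M+1-(i+1))) := by
        intro i _
        have h3 : n - (i+1) = n - 1 - i := by omega
        have h4 : M + 1 - (i+1) = M - i := by omega
        rw [h3, h4, Nat.choose_succ_succ]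
        push_cast
        ring
      rw [Finset.sum_range_succ', Finset.sum_congr rfl e1, Finset.sum_add_distrib,
        Finset.sum_neg_distrib]
      have key1 := ih (n-1) M ha hM
      have key2 := ih n (M+1) (by omega) h2
      rw [Finset.sum_range_succ'] at key2
      simp only [Nat.choose_zero_right, Nat.sub_zero, Nat.cast_one] at key2 ⊢
      have pascal : (Nat.choose (n-a) (M+1) : ℚ)
          = (Nat.choose (n-(a+1)) M : ℚ) + (Nat.choose (n-(a+1)) (M+1) : ℚ) := by
        have hx : n - a = (n - (a+1)) + 1 := by omega
        rw [hx]
        exact_mod_cast congrArg (Nat.cast (R := ℚ)) (Nat.choose_succ_succ (n-(a+1)) M)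
      have hnn : n - 1 - a = n - (a+1) := by omega
      rw [key1, hnn]
      linarith [key2, pascal]

lemma aux_sum (a b m : ℕ) (h : m ≤ a + b) :
    ∑ k ∈ Finset.range (m+1),
      (-1:ℚ)^(k+1) * (Nat.choose (a+b-m+k) k) * (Nat.choose a (m-k))
      = (-1:ℚ)^(m+1) * (Nat.choose b m : ℚ) := by
  have base := aux_vdm a (a+b) m (Nat.le_add_right a b) h
  have hrefl := Finset.sum_range_reflect
    (fun j => (-1:ℚ)^j * (Nat.choose a j) * (Nat.choose (a+b-j) (m-j))) (m+1)
  have e1 : ∀ k ∈ Finset.range (m+1),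
      (-1:ℚ)^(k+1) * (Nat.choose (a+b-m+k) k) * (Nat.choose a (m-k))
      = (-1:ℚ)^(m+1) *
        ((-1:ℚ)^(m + 1 - 1 - k) * (Nat.choose a (m+1-1-k)) *
          (Nat.choose (a+b-(m+1-1-k)) (m-(m+1-1-k)))) := by
    intro k hk
    have hkm : k ≤ m := by
      have := Finset.mem_range.1 hk; omega
    have h3 : m + 1 - 1 - k = m - k := by omega
    have h4 : a + b - (m-k) = a + b - m + k := by omega
    have h5 : m - (m-k) = k := by omega
    rw [h3, h4, h5]
    have hsgn : (-1:ℚ)^(m+1) * (-1:ℚ)^(m-k) = (-1:ℚ)^(k+1) := by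
      rw [← pow_add]
      have : m + 1 + (m - k) = (k+1) + 2*(m-k) := by omega
      rw [this, pow_add, pow_mul]
      simp
    rw [show ((-1:ℚ)^(m+1) * ((-1:ℚ)^(m-k) * (Nat.choose a (m-k)) *
        (Nat.choose (a+b-m+k) k)) = ((-1:ℚ)^(m+1) * (-1:ℚ)^(m-k)) *
        (Nat.choose a (m-k)) * (Nat.choose (a+b-m+k) k)) from by ring, hsgn]
    ring
  rw [Finset.sum_congr rfl e1, ← Finset.mul_sum, hrefl, base]
  have : a + b - a = b := by omega
  rw [this]

/-- Binomial identity underlying the homogeneous limit of the determinantal formula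
for the 6V model with pDWBC at the free-fermion point:
`∑_{k=0}^{m} (−1)^{k+1} C(N−m−1+k,k) (C(i−1,m−k) − C(N−i,m−k))
  = (−1)^m (C(i−1,m) − C(N−i,m))` in ℚ. -/
theorem binomial_identity_homogeneous_limit (N m i : ℕ)
    (hi1 : 1 ≤ i) (hiN : i ≤ N) (hNm : m + 1 ≤ N) :
    ∑ k ∈ Finset.range (m + 1),
      (-1 : ℚ) ^ (k + 1) * (Nat.choose (N - m - 1 + k) k : ℚ) *
        ((Nat.choose (i - 1) (m - k) : ℚ) - (Nat.choose (N - i) (m - k) : ℚ))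
      = (-1 : ℚ) ^ m * ((Nat.choose (i - 1) m : ℚ) - (Nat.choose (N - i) m : ℚ)) := by
  set a := i - 1 with hadef
  set b := N - i with hbdef
  have hab : m ≤ a + b := by omega
  have hco : N - m - 1 = a + b - m := by omega
  have hco' : N - m - 1 = b + a - m := by omega
  have S1 := aux_sum a b m hab
  have S2 := aux_sum b a m (by omega)
  have split : ∀ k ∈ Finset.range (m+1),
      (-1 : ℚ) ^ (k + 1) * (Nat.choose (N - m - 1 + k) k : ℚ) *
        ((Nat.choose a (m - k) : ℚ) - (Nat.choose b (m - k) : ℚ))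
      = (-1:ℚ)^(k+1) * (Nat.choose (a+b-m+k) k) * (Nat.choose a (m-k))
        - (-1:ℚ)^(k+1) * (Nat.choose (b+a-m+k) k) * (Nat.choose b (m-k)) := by
    intro k _
    rw [← hco, ← hco']
    ring
  rw [Finset.sum_congr rfl split, Finset.sum_sub_distrib, S1, S2, pow_succ]
  ring
end

section
/- Let N, m, i be integers with m ≥ 2 even, 1 ≤ i ≤ N and N ≥ m+1. Then, in ℚ, C(i−1, m) − C(N−i, m) = (1/2) · ∑_{k=1}^{m−1} (−1)^{k+1} · C(N−m−1+k, k) · (C(i−1, m−k) − C(N−i, m−k)). Equivalently, writing f_i(t) = t^{i−1} − t^{N−i}, the normalized derivative f_i^{(m)}(1)/m! with m even is the stated linear combination (with coefficients independent of i) of the normalized odd-order derivatives f_i^{(m−k)}(1)/(m−k)!. -/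
/-!
Put `a = i - 1`, `b = N - i`, `c = N - m - 1`, so that `a + b = c + m`. Upper negation turns
`(-1)^k C(c+k, k)` into `choose (-(c+1)) k`, and Chu–Vandermonde in the binomial ring `ℤ` for
`-(c+1) + a = m - b - 1` gives `∑_{k+l=m} (-1)^k C(c+k, k) C(a, l) = (-1)^m C(b, m)`. Subtracting the
same identity with `a` and `b` swapped, for even `m` the terms `k = 0` and `k = m` contribute
`C(a, m) - C(b, m)` and `0`, which leaves twice the claimed relation.
-/

open Finset

theorem Ring.choose_natCast_sub_natCast_sub_one (n k : ℕ) :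
    Ring.choose ((k : ℤ) - n - 1) k = (-1) ^ k * (n.choose k : ℤ) := by
  rw [show (k : ℤ) - n - 1 = -(n - k + 1) by ring, Ring.choose_neg,
    show (n : ℤ) - k + 1 + k - 1 = n by ring, Ring.choose_natCast, Units.smul_def,
    Int.coe_negOnePow_natCast, smul_eq_mul]

theorem sum_antidiagonal_neg_one_pow_mul_choose_mul_choose {a b c m : ℕ} (h : a + b = c + m) :
    ∑ p ∈ antidiagonal m, (-1 : ℤ) ^ p.1 * ((c + p.1).choose p.1 : ℤ) * (a.choose p.2 : ℤ)
      = (-1) ^ m * (b.choose m : ℤ) := by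
  calc ∑ p ∈ antidiagonal m, (-1 : ℤ) ^ p.1 * ((c + p.1).choose p.1 : ℤ) * (a.choose p.2 : ℤ)
      = ∑ p ∈ antidiagonal m, Ring.choose (-(c + 1 : ℤ)) p.1 * Ring.choose (a : ℤ) p.2 := by
        refine sum_congr rfl fun p _ => ?_
        rw [Ring.choose_natCast,
          show -(c + 1 : ℤ) = p.1 - ((c + p.1 : ℕ) : ℤ) - 1 by push_cast; ring,
          Ring.choose_natCast_sub_natCast_sub_one]
    _ = Ring.choose (-(c + 1 : ℤ) + a) m := (Ring.add_choose_eq m (Commute.all _ _)).symm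
    _ = (-1) ^ m * (b.choose m : ℤ) := by
        rw [show -(c + 1 : ℤ) + a = m - b - 1 by omega, Ring.choose_natCast_sub_natCast_sub_one]

theorem Finset.Nat.sum_antidiagonal_eq_add_sum_Icc_add {M : Type*} [AddCommMonoid M]
    {m : ℕ} (hm : 0 < m) (f : ℕ × ℕ → M) :
    ∑ p ∈ antidiagonal m, f p = f (0, m) + ∑ k ∈ Icc 1 (m - 1), f (k, m - k) + f (m, 0) := by
  rw [Nat.sum_antidiagonal_eq_sum_range_succ_mk, sum_range_succ, Nat.sub_self, range_eq_Ico,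
    sum_eq_sum_Ico_succ_bot hm, Nat.sub_zero, ← Ico_add_one_right_eq_Icc,
    Nat.sub_one_add_one hm.ne']

theorem two_mul_choose_sub_choose_eq_sum {a b c m : ℕ} (h : a + b = c + m) (hm : 0 < m)
    (hme : Even m) :
    2 * ((a.choose m : ℤ) - b.choose m) = ∑ k ∈ Icc 1 (m - 1),
      (-1) ^ (k + 1) * ((c + k).choose k : ℤ) * (a.choose (m - k) - b.choose (m - k)) := by
  have hdiff : ∑ p ∈ antidiagonal m,
      (-1 : ℤ) ^ p.1 * ((c + p.1).choose p.1 : ℤ) * (a.choose p.2 - b.choose p.2)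
        = b.choose m - a.choose m := by
    simp only [mul_sub, sum_sub_distrib, sum_antidiagonal_neg_one_pow_mul_choose_mul_choose h,
      sum_antidiagonal_neg_one_pow_mul_choose_mul_choose (show b + a = c + m by omega),
      hme.neg_one_pow, one_mul]
  rw [Nat.sum_antidiagonal_eq_add_sum_Icc_add hm] at hdiff
  simp only [pow_zero, Nat.choose_zero_right, Nat.cast_one, sub_self, mul_zero, add_zero,
    one_mul] at hdiff
  simp only [pow_succ, mul_neg_one, neg_mul, sum_neg_distrib]
  linear_combination hdiff

/-- For even `m ≥ 2`, the even-order normalized Taylor coefficient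
`f_i^{(m)}(1)/m! = C(i−1,m) − C(N−i,m)` is the stated linear combination of the
lower-order ones:
`C(i−1,m) − C(N−i,m) = (1/2) ∑_{k=1}^{m−1} (−1)^{k+1} C(N−m−1+k,k)
  (C(i−1,m−k) − C(N−i,m−k))` in ℚ. -/
theorem even_coeff_linear_combination (N m i : ℕ)
    (hm2 : 2 ≤ m) (hme : Even m) (hi1 : 1 ≤ i) (hiN : i ≤ N) (hNm : m + 1 ≤ N) :
    (Nat.choose (i - 1) m : ℚ) - (Nat.choose (N - i) m : ℚ)
      = (1 / 2 : ℚ) * ∑ k ∈ Finset.Icc 1 (m - 1),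
          (-1 : ℚ) ^ (k + 1) * (Nat.choose (N - m - 1 + k) k : ℚ) *
            ((Nat.choose (i - 1) (m - k) : ℚ) - (Nat.choose (N - i) (m - k) : ℚ)) := by
  have key := two_mul_choose_sub_choose_eq_sum (a := i - 1) (b := N - i) (c := N - m - 1)
    (by omega) (by omega) hme
  have keyℚ := congrArg (Int.cast : ℤ → ℚ) key
  push_cast at keyℚ
  linear_combination keyℚ / 2
end

section
/- Let s, n be positive integers with s ≤ n. Then for every real number ξ, ∑_{p=1}^{s} (−1)^{s−p} · C(n−p, s−p) · C(n+s−1, n+s−p) · (1+ξ)^{p−1} = ∑_{l=0}^{s−1} C(n+s−1, l) · C(2(s−1)−l, s−1−l) · ξ^{l}. -/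
/-!
Expand `(1 + ξ) ^ (p - 1)` binomially. Since `C(N, p - 1) C(p - 1, l) = C(N, l) C(N - l, p - 1 - l)`
with `N = n + s - 1`, the coefficient of `ξ ^ l` is `C(N, l)` times a convolution in which
`(-1) ^ q C(n - s + q, q) = C(-(n - s + 1), q)` is a binomial coefficient with negative upper
index. Chu–Vandermonde sums it to `C(-(n - s + 1) + (N - l), s - 1 - l) = C(2(s - 1) - l, s - 1 - l)`.
-/

open Finset

theorem Ring.choose_neg_natCast_add_one {R : Type*} [CommRing R] [BinomialRing R] (a i : ℕ) :
    Ring.choose (-((a + 1 : ℕ) : R)) i = (-1) ^ i * ((a + i).choose i : R) := by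
  rw [Ring.choose_neg, Units.smul_def, Int.coe_negOnePow_natCast, zsmul_eq_mul]
  push_cast
  rw [show (a : R) + 1 + i - 1 = ((a + i : ℕ) : R) by push_cast; ring, Ring.choose_natCast]

theorem sum_neg_one_pow_mul_choose_mul_choose (a b j : ℕ) :
    ∑ m ∈ range (j + 1), (-1 : ℤ) ^ m * (a + m).choose m * (a + 1 + b).choose (j - m)
      = b.choose j := by
  have h := Ring.add_choose_eq (r := -((a + 1 : ℕ) : ℤ)) (s := ((a + 1 + b : ℕ) : ℤ)) j
    (Commute.all _ _)
  rw [show -((a + 1 : ℕ) : ℤ) + ((a + 1 + b : ℕ) : ℤ) = b by push_cast; ring,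
    Nat.sum_antidiagonal_eq_sum_range_succ_mk] at h
  simp only [Ring.choose_natCast, Ring.choose_neg_natCast_add_one] at h
  exact h.symm

theorem sum_neg_one_pow_mul_choose_mul_choose_mul_choose {k l : ℕ} (c : ℕ) (hl : l ≤ k) :
    ∑ m ∈ range (k + 1), (-1 : ℤ) ^ m * (c + m).choose m * (2 * k + c + 1).choose (k - m) *
        (k - m).choose l
      = (2 * k + c + 1).choose l * (2 * k - l).choose (k - l) := by
  have vanish : ∀ m ∈ range (k + 1), m ∉ range (k - l + 1) →
      (-1 : ℤ) ^ m * (c + m).choose m * (2 * k + c + 1).choose (k - m) * (k - m).choose l = 0 := by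
    intro m hmk hm
    simp only [mem_range] at hmk hm
    rw [Nat.choose_eq_zero_of_lt (n := k - m) (k := l) (by omega), Nat.cast_zero, mul_zero]
  rw [← sum_subset (range_subset_range.mpr (by omega)) vanish,
    ← sum_neg_one_pow_mul_choose_mul_choose c (2 * k - l) (k - l), mul_sum]
  refine sum_congr rfl fun m hm => ?_
  rw [mem_range] at hm
  have key := Nat.choose_mul (n := 2 * k + c + 1) (k := k - m) (s := l) (by omega)
  rw [show 2 * k + c + 1 - l = c + 1 + (2 * k - l) by omega,
    show k - m - l = k - l - m by omega] at key
  rw [mul_assoc _ _ ((k - m).choose l : ℤ), ← Nat.cast_mul, key, Nat.cast_mul]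
  ring

theorem one_add_pow_eq_sum_range {R : Type*} [CommSemiring R] (x : R) {d K : ℕ} (h : d < K) :
    (1 + x) ^ d = ∑ l ∈ range K, (d.choose l : R) * x ^ l := by
  rw [add_comm, add_pow, ← sum_subset (range_subset_range.mpr h)]
  · exact sum_congr rfl fun l _ => by rw [one_pow, mul_one, mul_comm]
  · intro l _ hl
    rw [Nat.choose_eq_zero_of_lt (by simpa using hl), Nat.cast_zero, zero_mul]

/-- Non-alternating closed form of the quantity `U₁`:
`∑_{p=1}^{s} (−1)^{s−p} C(n−p,s−p) C(n+s−1,n+s−p) (1+ξ)^{p−1}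
  = ∑_{l=0}^{s−1} C(n+s−1,l) C(2(s−1)−l,s−1−l) ξ^l`. -/
theorem U1_nonalternating (s n : ℕ) (hs : 0 < s) (hsn : s ≤ n) (ξ : ℝ) :
    ∑ p ∈ Finset.Icc 1 s,
      (-1 : ℝ) ^ (s - p) * (Nat.choose (n - p) (s - p) : ℝ) *
        (Nat.choose (n + s - 1) (n + s - p) : ℝ) * (1 + ξ) ^ (p - 1)
      = ∑ l ∈ Finset.range s,
          (Nat.choose (n + s - 1) l : ℝ) *
            (Nat.choose (2 * (s - 1) - l) (s - 1 - l) : ℝ) * ξ ^ l := by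
  obtain ⟨k, rfl⟩ : ∃ k, s = k + 1 := ⟨s - 1, by omega⟩
  obtain ⟨c, rfl⟩ : ∃ c, n = k + 1 + c := ⟨n - (k + 1), by omega⟩
  rw [show k + 1 + c + (k + 1) - 1 = 2 * k + c + 1 by omega, Nat.add_sub_cancel]
  calc _ = ∑ m ∈ range (k + 1), (-1 : ℝ) ^ m * (c + m).choose m *
          (2 * k + c + 1).choose (k - m) * (1 + ξ) ^ (k - m) := by
        refine sum_nbij' (fun p => k + 1 - p) (fun m => k + 1 - m) ?_ ?_ ?_ ?_ ?_ <;>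
          simp only [mem_Icc, mem_range]
        any_goals omega
        intro p hp
        rw [show k + 1 + c - p = c + (k + 1 - p) by omega, show k - (k + 1 - p) = p - 1 by omega,
          show k + 1 + c + (k + 1) - p = 2 * k + c + 1 - (p - 1) by omega,
          Nat.choose_symm (by omega)]
    _ = ∑ l ∈ range (k + 1), (∑ m ∈ range (k + 1), (-1 : ℝ) ^ m * (c + m).choose m *
          (2 * k + c + 1).choose (k - m) * (k - m).choose l) * ξ ^ l := by
        simp_rw [sum_mul]
        rw [sum_comm]
        refine sum_congr rfl fun m hm => ?_
        rw [one_add_pow_eq_sum_range ξ (K := k + 1) (by simp at hm; omega), mul_sum]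
        exact sum_congr rfl fun l _ => by ring
    _ = _ := sum_congr rfl fun l hl => by
        have h := congrArg (Int.cast : ℤ → ℝ)
          (sum_neg_one_pow_mul_choose_mul_choose_mul_choose c (by simpa using hl : l ≤ k))
        push_cast at h
        rw [h]
end

section
/- Let k, l, s, n be integers with 1 ≤ l < k ≤ s ≤ n. Then ∑_{j=0}^{k−1} (−1)^{j} · C(n+2k−s−1, k−j−1) · C(n−s+j, n−s) · C(s−j−1, 2l−1) = ∑_{j=0}^{k−1} (−1)^{j} · C(n+2k−s−1, k−j−1) · C(n−s+j, n−s) · C(n+j, 2l−1). -/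
open Finset

/-!
Put `m = n - s`, `K = k - 1`, `N = m + 2K + 1` and
`Φ f = altChooseSum m K f = ∑_{j ≤ K} (-1)^j C(N, K-j) C(m+j, m) f j`.
With `a = s - k`, the two sides are `Φ` applied to `C(a + x, 2l - 1)` at `x = K - j` and at
`x = m + K + 1 + j`, so by Vandermonde it suffices to compare `Φ` on `C(K - j, t)` and on
`C(m + K + 1 + j, t)` for `t ≤ 2K`. Trading `C(N, K - j)` against the extra binomial factor
(`C(N, b) C(b, t) = C(N, t) C(N - t, b - t)`, resp. `C(N, b) C(N - b, t) = C(N, t) C(N - t, b)`)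
leaves `C(N, t)` times a convolution `∑_j (-1)^j C(N - t, ·) C(m + j, m)`, which is Chu–Vandermonde
at the negative upper index `-(m + 1)`; both come out as `C(N, t) C(2K - t, K)`.
-/

theorem Ring.choose_neg_natCast_sub_one {R : Type*} [CommRing R] [BinomialRing R] (m j : ℕ) :
    Ring.choose (-(m : R) - 1) j = (-1) ^ j * ((m + j).choose m : R) := by
  rw [show -(m : R) - 1 = -((m + 1 : ℕ) : R) by push_cast; ring, Ring.choose_neg,
    show ((m + 1 : ℕ) : R) + j - 1 = ((m + j : ℕ) : R) by push_cast; ring, Ring.choose_natCast,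
    Units.smul_def, Int.coe_negOnePow_natCast, zsmul_eq_mul, Nat.choose_symm_add]
  push_cast; ring

theorem sum_range_neg_one_pow_mul_choose_mul_choose (m M K : ℕ) :
    ∑ j ∈ range (K + 1), (-1 : ℤ) ^ j * (m + 1 + M).choose (K - j) * (m + j).choose m
      = M.choose K := by
  have hvdm := Ring.add_choose_eq (r := -(m : ℤ) - 1) (s := ((m + 1 + M : ℕ) : ℤ)) K (.all _ _)
  rw [show -(m : ℤ) - 1 + ((m + 1 + M : ℕ) : ℤ) = M by push_cast; ring, Ring.choose_natCast,
    Nat.sum_antidiagonal_eq_sum_range_succ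
      (fun i j ↦ Ring.choose (-(m : ℤ) - 1) i * Ring.choose ((m + 1 + M : ℕ) : ℤ) j)] at hvdm
  rw [hvdm]
  refine sum_congr rfl fun j _ ↦ ?_
  rw [Ring.choose_neg_natCast_sub_one, Ring.choose_natCast]
  ring

theorem Nat.choose_mul_choose_sub_eq_zero {N a t : ℕ} (h : N < a + t) :
    N.choose a * (N - a).choose t = 0 := by
  rcases lt_or_ge N a with ha | ha
  · rw [Nat.choose_eq_zero_of_lt ha, zero_mul]
  · rw [Nat.choose_eq_zero_of_lt (by omega : N - a < t), mul_zero]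

theorem Nat.choose_mul_choose_sub_comm (N a t : ℕ) :
    N.choose a * (N - a).choose t = N.choose t * (N - t).choose a := by
  by_cases h : a + t ≤ N
  · have ha := Nat.choose_mul (n := N) (Nat.le_add_right a t)
    have ht := Nat.choose_mul (n := N) (Nat.le_add_left t a)
    rw [Nat.add_sub_cancel_left] at ha
    rw [Nat.add_sub_cancel] at ht
    rw [← ha, ← ht, Nat.choose_symm_add]
  · rw [Nat.choose_mul_choose_sub_eq_zero (by omega), Nat.choose_mul_choose_sub_eq_zero (by omega)]

def altChooseSum (m K : ℕ) (f : ℕ → ℤ) : ℤ :=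
  ∑ j ∈ range (K + 1), (-1) ^ j * (m + 2 * K + 1).choose (K - j) * (m + j).choose m * f j

theorem altChooseSum_sum_mul {ι : Type*} (m K : ℕ) (s : Finset ι) (c : ι → ℤ) (f : ι → ℕ → ℤ) :
    altChooseSum m K (fun j ↦ ∑ i ∈ s, c i * f i j) = ∑ i ∈ s, c i * altChooseSum m K (f i) := by
  simp only [altChooseSum, mul_sum]
  rw [sum_comm]
  exact sum_congr rfl fun _ _ ↦ sum_congr rfl fun _ _ ↦ by ring

theorem altChooseSum_choose_add (m K t : ℕ) (ht : t ≤ 2 * K) :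
    altChooseSum m K (fun j ↦ (m + K + 1 + j).choose t)
      = (m + 2 * K + 1).choose t * (2 * K - t).choose K := by
  have hterm : ∀ j ∈ range (K + 1),
      (-1) ^ j * (m + 2 * K + 1).choose (K - j) * (m + j).choose m * (m + K + 1 + j).choose t
        = (m + 2 * K + 1).choose t *
          ((-1 : ℤ) ^ j * (m + 1 + (2 * K - t)).choose (K - j) * (m + j).choose m) := by
    intro j hj
    have h := Nat.choose_mul_choose_sub_comm (m + 2 * K + 1) (K - j) t
    rw [mem_range] at hj
    rw [show m + 2 * K + 1 - (K - j) = m + K + 1 + j by omega,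
      show m + 2 * K + 1 - t = m + 1 + (2 * K - t) by omega] at h
    zify at h
    linear_combination ((-1 : ℤ) ^ j * (m + j).choose m) * h
  rw [altChooseSum, sum_congr rfl hterm, ← mul_sum, sum_range_neg_one_pow_mul_choose_mul_choose]

theorem altChooseSum_choose_sub (m K t : ℕ) (ht : t ≤ 2 * K) :
    altChooseSum m K (fun j ↦ (K - j).choose t)
      = (m + 2 * K + 1).choose t * (2 * K - t).choose K := by
  rcases le_or_gt t K with htK | htK
  · have htrunc : altChooseSum m K (fun j ↦ (K - j).choose t) = ∑ j ∈ range (K - t + 1),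
        (-1 : ℤ) ^ j * (m + 2 * K + 1).choose (K - j) * (m + j).choose m * (K - j).choose t := by
      refine (sum_subset (by intro j; simp only [mem_range]; omega) fun j hj hjt ↦ ?_).symm
      simp only [mem_range] at hj hjt
      dsimp only
      rw [Nat.choose_eq_zero_of_lt (by omega : K - j < t), Nat.cast_zero, mul_zero]
    have hterm : ∀ j ∈ range (K - t + 1),
        (-1 : ℤ) ^ j * (m + 2 * K + 1).choose (K - j) * (m + j).choose m * (K - j).choose t
          = (m + 2 * K + 1).choose t *
            ((-1 : ℤ) ^ j * (m + 1 + (2 * K - t)).choose (K - t - j) * (m + j).choose m) := by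
      intro j hj
      rw [mem_range] at hj
      have h := Nat.choose_mul (n := m + 2 * K + 1) (show t ≤ K - j by omega)
      rw [show K - j - t = K - t - j by omega,
        show m + 2 * K + 1 - t = m + 1 + (2 * K - t) by omega] at h
      zify at h
      linear_combination ((-1 : ℤ) ^ j * (m + j).choose m) * h
    rw [htrunc, sum_congr rfl hterm, ← mul_sum, sum_range_neg_one_pow_mul_choose_mul_choose,
      ← Nat.choose_symm (show K ≤ 2 * K - t by omega), show 2 * K - t - K = K - t by omega]
  · rw [Nat.choose_eq_zero_of_lt (show 2 * K - t < K by omega), Nat.cast_zero, mul_zero]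
    refine sum_eq_zero fun j _ ↦ ?_
    dsimp only
    rw [Nat.choose_eq_zero_of_lt (by omega : K - j < t), Nat.cast_zero, mul_zero]

theorem altChooseSum_add_choose_sub_eq_add_choose_add (m K a d : ℕ) (hd : d ≤ 2 * K) :
    altChooseSum m K (fun j ↦ (a + (K - j)).choose d)
      = altChooseSum m K (fun j ↦ (a + (m + K + 1 + j)).choose d) := by
  simp only [Nat.add_choose_eq a, Nat.cast_sum, Nat.cast_mul, altChooseSum_sum_mul]
  refine sum_congr rfl fun p hp ↦ ?_
  rw [HasAntidiagonal.mem_antidiagonal] at hp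
  rw [altChooseSum_choose_sub _ _ _ (by omega), altChooseSum_choose_add _ _ _ (by omega)]

theorem Ckl_eq_Dkl_of_lt_general (k l s n : ℕ)
    (hlk : l < k) (hks : k ≤ s) (hsn : s ≤ n) :
    ∑ j ∈ Finset.range k,
      (-1 : ℤ) ^ j * (Nat.choose (n + 2 * k - s - 1) (k - j - 1) : ℤ) *
        (Nat.choose (n - s + j) (n - s) : ℤ) * (Nat.choose (s - j - 1) (2 * l - 1) : ℤ)
      = ∑ j ∈ Finset.range k,
          (-1 : ℤ) ^ j * (Nat.choose (n + 2 * k - s - 1) (k - j - 1) : ℤ) *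
            (Nat.choose (n - s + j) (n - s) : ℤ) * (Nat.choose (n + j) (2 * l - 1) : ℤ) := by
  obtain ⟨K, rfl⟩ : ∃ K, k = K + 1 := ⟨k - 1, by omega⟩
  have hN : n + 2 * (K + 1) - s - 1 = n - s + 2 * K + 1 := by omega
  convert altChooseSum_add_choose_sub_eq_add_choose_add (n - s) K (s - (K + 1)) (2 * l - 1)
      (by omega) using 1 <;>
    refine sum_congr rfl fun j hj ↦ ?_ <;> rw [mem_range] at hj
  · rw [hN, show K + 1 - j - 1 = K - j by omega, show s - j - 1 = s - (K + 1) + (K - j) by omega]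
  · rw [hN, show K + 1 - j - 1 = K - j by omega,
      show n + j = s - (K + 1) + (n - s + K + 1 + j) by omega]

/-- Upper triangularity of `U = L⁻¹B`, i.e. `C_{k,l} = D_{k,l}` for `k > l`:
`∑_{j=0}^{k−1} (−1)^j C(n+2k−s−1,k−j−1) C(n−s+j,n−s) C(s−j−1,2l−1)
  = ∑_{j=0}^{k−1} (−1)^j C(n+2k−s−1,k−j−1) C(n−s+j,n−s) C(n+j,2l−1)`. -/
theorem Ckl_eq_Dkl_of_lt (k l s n : ℕ)
    (hl1 : 1 ≤ l) (hlk : l < k) (hks : k ≤ s) (hsn : s ≤ n) :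
    ∑ j ∈ Finset.range k,
      (-1 : ℤ) ^ j * (Nat.choose (n + 2 * k - s - 1) (k - j - 1) : ℤ) *
        (Nat.choose (n - s + j) (n - s) : ℤ) * (Nat.choose (s - j - 1) (2 * l - 1) : ℤ)
      = ∑ j ∈ Finset.range k,
          (-1 : ℤ) ^ j * (Nat.choose (n + 2 * k - s - 1) (k - j - 1) : ℤ) *
            (Nat.choose (n - s + j) (n - s) : ℤ) * (Nat.choose (n + j) (2 * l - 1) : ℤ) :=
  Ckl_eq_Dkl_of_lt_general k l s n hlk hks hsn
end

section
/- Let σ ∈ (0,1]. For ξ > 0 and real x, y define F(x, y, ξ) = x − (2(1+ξ)/(ξ(2+ξ)))·y − (1+ξ)·( −σ(4+ξ)/(ξ(2+ξ)) + (ξ + 2σ(1+ξ) + √(ξ² + 4σ²(1+ξ)))/(2ξ(1+ξ)) ), and define x(ξ) = 1/2 + (2σ²ξ(ξ+1) + ξ(2+ξ(2+ξ)))/(2(2+ξ(2+ξ))·√(ξ²+4σ²(1+ξ))) and y(ξ) = σ − σ²(2+ξ)³/(2(2+ξ(2+ξ))·√(ξ²+4σ²(1+ξ))). Then for every ξ >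 0: (i) F(x(ξ), y(ξ), ξ) = 0, and (ii) the derivative of the function ξ' ↦ F(x(ξ), y(ξ), ξ') at ξ' = ξ equals 0. -/
/-!
Writing `D(ξ) = ξ² + 4σ²(1+ξ)`, the family of lines simplifies to
`F(x, y, ξ) = (x - 1/2) - A(ξ) (y - σ) - R(ξ)` with slope `A(ξ) = 2(1+ξ)/(ξ(2+ξ))` and offset
`R(ξ) = √D(ξ)/(2ξ)`. The envelope of a family of lines `X - A(ξ) Y - R(ξ) = 0` is the point
`Y = -R'/A'`, `X = A Y + R`, and computing `A' = -2(2+2ξ+ξ²)/(ξ(2+ξ))²` and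
`R' = -σ²(2+ξ)/(ξ²√D)` (from `ξD' - 2D = -4σ²(2+ξ)`) gives exactly `(x(ξ), y(ξ))`.
-/

theorem HasDerivAt.line_family_envelope {A R : ℝ → ℝ} {t A' R' X Y : ℝ}
    (hA : HasDerivAt A A' t) (hR : HasDerivAt R R' t)
    (hY : A' * Y + R' = 0) (hX : X = A t * Y + R t) :
    X - A t * Y - R t = 0 ∧ HasDerivAt (fun s => X - A s * Y - R s) 0 t := by
  refine ⟨by rw [hX]; ring, ?_⟩
  refine (((hasDerivAt_const t X).sub (hA.mul_const Y)).sub hR).congr_deriv ?_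
  linear_combination -hY

namespace ArcticCurve

variable (σ : ℝ)

noncomputable def tangentSlope (ξ : ℝ) : ℝ := 2 * (1 + ξ) / (ξ * (2 + ξ))

noncomputable def tangentOffset (ξ : ℝ) : ℝ :=
  Real.sqrt (ξ ^ 2 + 4 * σ ^ 2 * (1 + ξ)) / (2 * ξ)

theorem disc_pos {ξ : ℝ} (hξ : 0 < ξ) : 0 < ξ ^ 2 + 4 * σ ^ 2 * (1 + ξ) := by positivity

theorem line_eq_tangentSlope_tangentOffset (x y : ℝ) {ξ : ℝ} (hξ : 0 < ξ) :
    x - (2 * (1 + ξ) / (ξ * (2 + ξ))) * y -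
        (1 + ξ) * (-σ * (4 + ξ) / (ξ * (2 + ξ)) +
          (ξ + 2 * σ * (1 + ξ) + Real.sqrt (ξ ^ 2 + 4 * σ ^ 2 * (1 + ξ))) /
            (2 * ξ * (1 + ξ))) =
      (x - 1 / 2) - tangentSlope ξ * (y - σ) - tangentOffset σ ξ := by
  unfold tangentSlope tangentOffset
  field_simp
  ring

theorem hasDerivAt_tangentSlope {ξ : ℝ} (hξ : 0 < ξ) :
    HasDerivAt tangentSlope (-2 * (2 + ξ * (2 + ξ)) / (ξ * (2 + ξ)) ^ 2) ξ := by
  have hden : ξ * (2 + ξ) ≠ 0 := by positivity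
  refine ((((hasDerivAt_id' ξ).const_add 1).const_mul 2).div
    ((hasDerivAt_id' ξ).mul ((hasDerivAt_id' ξ).const_add 2)) hden).congr_deriv ?_
  simp only [Pi.mul_apply]
  ring

theorem hasDerivAt_tangentOffset {ξ : ℝ} (hξ : 0 < ξ) :
    HasDerivAt (tangentOffset σ)
      (-σ ^ 2 * (2 + ξ) / (ξ ^ 2 * Real.sqrt (ξ ^ 2 + 4 * σ ^ 2 * (1 + ξ)))) ξ := by
  have hD := disc_pos σ hξ
  have hdisc : HasDerivAt (fun t => t ^ 2 + 4 * σ ^ 2 * (1 + t)) (2 * ξ + 4 * σ ^ 2) ξ :=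
    ((hasDerivAt_pow 2 ξ).add (((hasDerivAt_id' ξ).const_add 1).const_mul (4 * σ ^ 2))).congr_deriv
      (by push_cast; ring)
  refine ((hdisc.sqrt hD.ne').div ((hasDerivAt_id' ξ).const_mul 2) (by positivity)).congr_deriv ?_
  have hs := Real.sq_sqrt hD.le
  field_simp
  linear_combination (-2 : ℝ) * hs

theorem envelope_slope_eq {ξ : ℝ} (hξ : 0 < ξ) :
    -2 * (2 + ξ * (2 + ξ)) / (ξ * (2 + ξ)) ^ 2 *
        (-(σ ^ 2 * (2 + ξ) ^ 3 /
          (2 * (2 + ξ * (2 + ξ)) * Real.sqrt (ξ ^ 2 + 4 * σ ^ 2 * (1 + ξ))))) +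
      -σ ^ 2 * (2 + ξ) / (ξ ^ 2 * Real.sqrt (ξ ^ 2 + 4 * σ ^ 2 * (1 + ξ))) = 0 := by
  have hs0 := Real.sqrt_pos.mpr (disc_pos σ hξ)
  field_simp
  ring

theorem envelope_offset_eq {ξ : ℝ} (hξ : 0 < ξ) :
    (2 * σ ^ 2 * ξ * (ξ + 1) + ξ * (2 + ξ * (2 + ξ))) /
        (2 * (2 + ξ * (2 + ξ)) * Real.sqrt (ξ ^ 2 + 4 * σ ^ 2 * (1 + ξ))) =
      tangentSlope ξ * (-(σ ^ 2 * (2 + ξ) ^ 3 /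
          (2 * (2 + ξ * (2 + ξ)) * Real.sqrt (ξ ^ 2 + 4 * σ ^ 2 * (1 + ξ))))) +
        tangentOffset σ ξ := by
  have hD := disc_pos σ hξ
  have hs := Real.sq_sqrt hD.le
  have hs0 := Real.sqrt_pos.mpr hD
  unfold tangentSlope tangentOffset
  set r := Real.sqrt (ξ ^ 2 + 4 * σ ^ 2 * (1 + ξ))
  field_simp
  linear_combination -(2 + ξ * (2 + ξ)) * hs

end ArcticCurve

open ArcticCurve in
theorem arctic_curve_envelope_6V_pDWBC_general (σ : ℝ)
    (F : ℝ → ℝ → ℝ → ℝ)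
    (hF : ∀ x y ξ : ℝ, F x y ξ =
      x - (2 * (1 + ξ) / (ξ * (2 + ξ))) * y -
        (1 + ξ) * (-σ * (4 + ξ) / (ξ * (2 + ξ)) +
          (ξ + 2 * σ * (1 + ξ) + Real.sqrt (ξ ^ 2 + 4 * σ ^ 2 * (1 + ξ))) /
            (2 * ξ * (1 + ξ))))
    (x y : ℝ → ℝ)
    (hx : ∀ ξ : ℝ, x ξ = 1 / 2 +
      (2 * σ ^ 2 * ξ * (ξ + 1) + ξ * (2 + ξ * (2 + ξ))) /
        (2 * (2 + ξ * (2 + ξ)) * Real.sqrt (ξ ^ 2 + 4 * σ ^ 2 * (1 + ξ))))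
    (hy : ∀ ξ : ℝ, y ξ = σ -
      σ ^ 2 * (2 + ξ) ^ 3 /
        (2 * (2 + ξ * (2 + ξ)) * Real.sqrt (ξ ^ 2 + 4 * σ ^ 2 * (1 + ξ)))) :
    ∀ ξ : ℝ, 0 < ξ →
      F (x ξ) (y ξ) ξ = 0 ∧ deriv (fun ξ' => F (x ξ) (y ξ) ξ') ξ = 0 := by
  intro ξ hξ
  have hline : ∀ t, 0 < t →
      F (x ξ) (y ξ) t = (x ξ - 1 / 2) - tangentSlope t * (y ξ - σ) - tangentOffset σ t :=
    fun t ht => (hF _ _ t).trans (line_eq_tangentSlope_tangentOffset σ _ _ ht)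
  obtain ⟨hzero, hderiv⟩ := (hasDerivAt_tangentSlope hξ).line_family_envelope
    (X := x ξ - 1 / 2) (Y := y ξ - σ) (hasDerivAt_tangentOffset σ hξ)
    (by rw [hy, sub_sub_cancel_left]; exact envelope_slope_eq σ hξ)
    (by rw [hx, hy, add_sub_cancel_left, sub_sub_cancel_left]; exact envelope_offset_eq σ hξ)
  refine ⟨(hline ξ hξ).trans hzero, ?_⟩
  refine (hderiv.congr_of_eventuallyEq ?_).deriv
  filter_upwards [Ioi_mem_nhds hξ] with t ht using hline t ht

/-- The parametrization `(x(ξ), y(ξ))` of the arctic curve of the 6V model with pDWBC at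
the free-fermion point (`a = b = 1`, `c = √2`, aspect ratio `σ`) is the envelope of the
family of tangent lines `F(x,y,ξ) = 0`: for every `ξ > 0`, `F(x(ξ),y(ξ),ξ) = 0` and
`∂_ξ F(x(ξ),y(ξ),ξ) = 0`. -/
theorem arctic_curve_envelope_6V_pDWBC (σ : ℝ) (hσ0 : 0 < σ) (hσ1 : σ ≤ 1)
    (F : ℝ → ℝ → ℝ → ℝ)
    (hF : ∀ x y ξ : ℝ, F x y ξ =
      x - (2 * (1 + ξ) / (ξ * (2 + ξ))) * y -
        (1 + ξ) * (-σ * (4 + ξ) / (ξ * (2 + ξ)) +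
          (ξ + 2 * σ * (1 + ξ) + Real.sqrt (ξ ^ 2 + 4 * σ ^ 2 * (1 + ξ))) /
            (2 * ξ * (1 + ξ))))
    (x y : ℝ → ℝ)
    (hx : ∀ ξ : ℝ, x ξ = 1 / 2 +
      (2 * σ ^ 2 * ξ * (ξ + 1) + ξ * (2 + ξ * (2 + ξ))) /
        (2 * (2 + ξ * (2 + ξ)) * Real.sqrt (ξ ^ 2 + 4 * σ ^ 2 * (1 + ξ))))
    (hy : ∀ ξ : ℝ, y ξ = σ -
      σ ^ 2 * (2 + ξ) ^ 3 /
        (2 * (2 + ξ * (2 + ξ)) * Real.sqrt (ξ ^ 2 + 4 * σ ^ 2 * (1 + ξ)))) :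
    ∀ ξ : ℝ, 0 < ξ →
      F (x ξ) (y ξ) ξ = 0 ∧ deriv (fun ξ' => F (x ξ) (y ξ) ξ') ξ = 0 :=
  arctic_curve_envelope_6V_pDWBC_general σ F hF x y hx hy
end

section
/- Let σ = 1/2. For every ξ ≥ 0, define x = 1/2 + ((1/2)·ξ(ξ+1) + ξ(2+ξ(2+ξ)))/(2(2+ξ(2+ξ))·√(ξ²+ξ+1)) and y = 1/2 − (1/4)(2+ξ)³/(2(2+ξ(2+ξ))·√(ξ²+ξ+1)). Then P(x, y) = 0, where P(x,y) = −16y⁶ + 48y⁵ − (143/2)y⁴ + 63y³ − (8161/256)y² + (2145/256)y − 225/256 + x·(44y⁴ − 88y³ + (311/4)y² − (135/4)y + 373/64) + x²·(−44y⁴ + 88y³ − (471/4)y² + (295/4)y − 1157/64) + x³·(80y² − 80y + 73/2) + x⁴·(−40y² + 40y − 193/4) + 36x⁵ − 12x⁶. -/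
/-- At aspect ratio `σ = 1/2`, the tangent-method parametrization of the arctic curve of
the 6V model with pDWBC at the free-fermion point lies on the explicit degree-six
algebraic curve `P(x,y) = 0`. -/
theorem arctic_curve_degree_six_sigma_half (ξ : ℝ) (hξ : 0 ≤ ξ) (x y : ℝ)
    (hx : x = 1 / 2 +
      ((1 / 2) * ξ * (ξ + 1) + ξ * (2 + ξ * (2 + ξ))) /
        (2 * (2 + ξ * (2 + ξ)) * Real.sqrt (ξ ^ 2 + ξ + 1)))
    (hy : y = 1 / 2 -
      (1 / 4) * (2 + ξ) ^ 3 /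
        (2 * (2 + ξ * (2 + ξ)) * Real.sqrt (ξ ^ 2 + ξ + 1))) :
    -16 * y ^ 6 + 48 * y ^ 5 - (143 / 2) * y ^ 4 + 63 * y ^ 3 - (8161 / 256) * y ^ 2
      + (2145 / 256) * y - 225 / 256
      + x * (44 * y ^ 4 - 88 * y ^ 3 + (311 / 4) * y ^ 2 - (135 / 4) * y + 373 / 64)
      + x ^ 2 * (-44 * y ^ 4 + 88 * y ^ 3 - (471 / 4) * y ^ 2 + (295 / 4) * y - 1157 / 64)
      + x ^ 3 * (80 * y ^ 2 - 80 * y + 73 / 2)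
      + x ^ 4 * (-40 * y ^ 2 + 40 * y - 193 / 4)
      + 36 * x ^ 5 - 12 * x ^ 6 = 0 := by
  set s := Real.sqrt (ξ ^ 2 + ξ + 1) with hsdef
  have hq : (0:ℝ) < ξ ^ 2 + ξ + 1 := by positivity
  have hs0 : 0 < s := Real.sqrt_pos.mpr hq
  have hs2 : s ^ 2 = ξ ^ 2 + ξ + 1 := Real.sq_sqrt hq.le
  have hdpos : 0 < 2 * (2 + ξ * (2 + ξ)) * s := mul_pos (by positivity) hs0
  have hd : 2 * (2 + ξ * (2 + ξ)) * s ≠ 0 := hdpos.ne'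
  have hx' : x = 1 / 2 + ((1 / 2) * ξ * (ξ + 1) + ξ * (2 + ξ * (2 + ξ)))
      * (2 * (2 + ξ * (2 + ξ)) * s)⁻¹ := by rw [hx]; ring
  have hy' : y = 1 / 2 - (1 / 4) * (2 + ξ) ^ 3
      * (2 * (2 + ξ * (2 + ξ)) * s)⁻¹ := by rw [hy]; ring
  set u := (2 * (2 + ξ * (2 + ξ)) * s)⁻¹ with hudef
  have hu : (2 * (2 + ξ * (2 + ξ)) * s) * u = 1 := mul_inv_cancel₀ hd
  have key : (2 * (2 + ξ * (2 + ξ)) * s) ^ 6 *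
      (-16 * y ^ 6 + 48 * y ^ 5 - (143 / 2) * y ^ 4 + 63 * y ^ 3 - (8161 / 256) * y ^ 2
      + (2145 / 256) * y - 225 / 256
      + x * (44 * y ^ 4 - 88 * y ^ 3 + (311 / 4) * y ^ 2 - (135 / 4) * y + 373 / 64)
      + x ^ 2 * (-44 * y ^ 4 + 88 * y ^ 3 - (471 / 4) * y ^ 2 + (295 / 4) * y - 1157 / 64)
      + x ^ 3 * (80 * y ^ 2 - 80 * y + 73 / 2)
      + x ^ 4 * (-40 * y ^ 2 + 40 * y - 193 / 4)
      + 36 * x ^ 5 - 12 * x ^ 6) = 0 := by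
    rw [hx', hy']
    linear_combination ((1024:ℝ) + (1152:ℝ)*s^2 + (324:ℝ)*s^4 + (8192:ℝ)*ξ^1 + (8064:ℝ)*ξ^1*s^2 + (1944:ℝ)*ξ^1*s^4 + (34352:ℝ)*ξ^2 + (25740:ℝ)*ξ^2*s^2 + (5832:ℝ)*ξ^2*s^4 + (97104:ℝ)*ξ^3 + (49608:ℝ)*ξ^3*s^2 + (11340:ℝ)*ξ^3*s^4 + (203954:ℝ)*ξ^4 + (250785/4:ℝ)*ξ^4*s^2 + (15795:ℝ)*ξ^4*s^4 + (334108:ℝ)*ξ^5 + (203733/4:ℝ)*ξ^5*s^2 + (16524:ℝ)*ξ^5*s^4 + (7015331/16:ℝ)*ξ^6 + (319023/16:ℝ)*ξ^6*s^2 + (13284:ℝ)*ξ^6*s^4 + (7483727/16:ℝ)*ξ^7 + (-38511/4:ℝ)*ξ^7*s^2 + (8262:ℝ)*ξ^7*s^4 + (6533085/16:ℝ)*ξ^8 + (-179775/8:ℝ)*ξ^8*s^2 + (15795/4:ℝ)*ξ^8*s^4 + (2334829/8:ℝ)*ξ^9 + (-78165/4:ℝ)*ξ^9*s^2 + (2835/2:ℝ)*ξ^9*s^4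 + (5437835/32:ℝ)*ξ^10 + (-348705/32:ℝ)*ξ^10*s^2 + (729/2:ℝ)*ξ^10*s^4 + (2549801/32:ℝ)*ξ^11 + (-67203/16:ℝ)*ξ^11*s^2 + (243/4:ℝ)*ξ^11*s^4 + (943929/32:ℝ)*ξ^12 + (-70623/64:ℝ)*ξ^12*s^2 + (81/16:ℝ)*ξ^12*s^4 + (266969/32:ℝ)*ξ^13 + (-11601/64:ℝ)*ξ^13*s^2 + (436211/256:ℝ)*ξ^14 + (-3681/256:ℝ)*ξ^14*s^2 + (57715/256:ℝ)*ξ^15 + (3757/256:ℝ)*ξ^16) * hs2 + ((-1024:ℝ) + (-4096:ℝ)*s^1*u^1 + (-128:ℝ)*s^2 + (-16384:ℝ)*s^2*u^2 + (-512:ℝ)*s^3*u^1 + (-65536:ℝ)*s^3*u^3 + (828:ℝ)*s^4 + (-2048:ℝ)*s^4*u^2 + (-262144:ℝ)*s^4*u^4 + (3312:ℝ)*s^5*u^1 + (-8192:ℝ)*s^5*u^3 + (-1048576:ℝ)*s^5*u^5 + (-9216:ℝ)*ξ^1 + (-40960:ℝ)*ξ^1*s^1*u^1 + (-1024:ℝ)*ξ^1*s^2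 + (-180224:ℝ)*ξ^1*s^2*u^2 + (-4608:ℝ)*ξ^1*s^3*u^1 + (-786432:ℝ)*ξ^1*s^3*u^3 + (5796:ℝ)*ξ^1*s^4 + (-20480:ℝ)*ξ^1*s^4*u^2 + (-3407872:ℝ)*ξ^1*s^4*u^4 + (26496:ℝ)*ξ^1*s^5*u^1 + (-90112:ℝ)*ξ^1*s^5*u^3 + (-14680064:ℝ)*ξ^1*s^5*u^5 + (-43568:ℝ)*ξ^2 + (-213184:ℝ)*ξ^2*s^1*u^1 + (-604:ℝ)*ξ^2*s^2 + (-1024768:ℝ)*ξ^2*s^2*u^2 + (-6768:ℝ)*ξ^2*s^3*u^1 + (-4852736:ℝ)*ξ^2*s^3*u^3 + (17640:ℝ)*ξ^2*s^4 + (-46528:ℝ)*ξ^2*s^4*u^2 + (-22687744:ℝ)*ξ^2*s^4*u^4 + (95400:ℝ)*ξ^2*s^5*u^1 + (-272128:ℝ)*ξ^2*s^5*u^3 + (-104906752:ℝ)*ξ^2*s^5*u^5 + (-139648:ℝ)*ξ^3 + (-751296:ℝ)*ξ^3*s^1*u^1 + (13692:ℝ)*ξ^3*s^2 + (-3939840:ℝ)*ξ^3*s^2*u^2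 + (50304:ℝ)*ξ^3*s^3*u^1 + (-20218880:ℝ)*ξ^3*s^3*u^3 + (30492:ℝ)*ξ^3*s^4 + (164928:ℝ)*ξ^3*s^4*u^2 + (-101859328:ℝ)*ξ^3*s^4*u^4 + (204120:ℝ)*ξ^3*s^5*u^1 + (432640:ℝ)*ξ^3*s^5*u^3 + (-505004032:ℝ)*ξ^3*s^5*u^5 + (-335410:ℝ)*ξ^4 + (-1987368:ℝ)*ξ^4*s^1*u^1 + (263639/4:ℝ)*ξ^4*s^2 + (-11381024:ℝ)*ξ^4*s^2*u^2 + (317199:ℝ)*ξ^4*s^3*u^1 + (-63332992:ℝ)*ξ^4*s^3*u^3 + (118917/4:ℝ)*ξ^4*s^4 + (1456476:ℝ)*ξ^4*s^4*u^2 + (-343912960:ℝ)*ξ^4*s^4*u^4 + (276165:ℝ)*ξ^4*s^5*u^1 + (6392560:ℝ)*ξ^4*s^5*u^3 + (-1828464640:ℝ)*ξ^4*s^5*u^5 + (-635166:ℝ)*ξ^5 + (-4161600:ℝ)*ξ^5*s^1*u^1 + (341741/2:ℝ)*ξ^5*s^2 + (-26098464:ℝ)*ξ^5*s^2*u^2 +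 (974505:ℝ)*ξ^5*s^3*u^1 + (-157797632:ℝ)*ξ^5*s^3*u^3 + (29097/4:ℝ)*ξ^5*s^4 + (5267424:ℝ)*ξ^5*s^4*u^2 + (-924960256:ℝ)*ξ^5*s^4*u^4 + (208998:ℝ)*ξ^5*s^5*u^1 + (27225456:ℝ)*ξ^5*s^5*u^3 + (-5279211520:ℝ)*ξ^5*s^5*u^5 + (-15624323/16:ℝ)*ξ^6 + (-28470259/4:ℝ)*ξ^6*s^1*u^1 + (1219559/4:ℝ)*ξ^6*s^2 + (-49091395:ℝ)*ξ^6*s^2*u^2 + (4069721/2:ℝ)*ξ^6*s^3*u^1 + (-323521484:ℝ)*ξ^6*s^3*u^3 + (-410625/16:ℝ)*ξ^6*s^4 + (12671860:ℝ)*ξ^6*s^4*u^2 + (-2051942448:ℝ)*ξ^6*s^4*u^4 + (-56403/4:ℝ)*ξ^6*s^5*u^1 + (74670088:ℝ)*ξ^6*s^5*u^3 + (-12595436736:ℝ)*ξ^6*s^5*u^5 + (-9922393/8:ℝ)*ξ^7 + (-40550437/4:ℝ)*ξ^7*s^1*u^1 + (812977/2:ℝ)*ξ^7*s^2 + (-77343896:ℝ)*ξ^7*s^2*u^2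 + (3187254:ℝ)*ξ^7*s^3*u^1 + (-557938092:ℝ)*ξ^7*s^3*u^3 + (-190791/4:ℝ)*ξ^7*s^4 + (22837468:ℝ)*ξ^7*s^4*u^2 + (-3841433568:ℝ)*ξ^7*s^4*u^4 + (-1115595/4:ℝ)*ξ^7*s^5*u^1 + (152572160:ℝ)*ξ^7*s^5*u^3 + (-25423424576:ℝ)*ξ^7*s^5*u^5 + (-21032143/16:ℝ)*ξ^8 + (-97378181/8:ℝ)*ξ^8*s^1*u^1 + (840957/2:ℝ)*ξ^8*s^2 + (-103474657:ℝ)*ξ^8*s^2*u^2 + (7835295/2:ℝ)*ξ^8*s^3*u^1 + (-821457002:ℝ)*ξ^8*s^3*u^3 + (-383733/8:ℝ)*ξ^8*s^4 + (32489327:ℝ)*ξ^8*s^4*u^2 + (-6164623344:ℝ)*ξ^8*s^4*u^4 + (-3471885/8:ℝ)*ξ^8*s^5*u^1 + (246650900:ℝ)*ξ^8*s^5*u^3 + (-44128112544:ℝ)*ξ^8*s^5*u^5 + (-9343235/8:ℝ)*ξ^9 + (-24820503/2:ℝ)*ξ^9*s^1*u^1 + (686989/2:ℝ)*ξ^9*s^2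 + (-118605315:ℝ)*ξ^9*s^2*u^2 + (3868869:ℝ)*ξ^9*s^3*u^1 + (-1043007680:ℝ)*ξ^9*s^3*u^3 + (-66339/2:ℝ)*ξ^9*s^4 + (37520574:ℝ)*ξ^9*s^4*u^2 + (-8573734912:ℝ)*ξ^9*s^4*u^4 + (-419940:ℝ)*ξ^9*s^5*u^1 + (325714540:ℝ)*ξ^9*s^5*u^3 + (-66636300160:ℝ)*ξ^9*s^5*u^5 + (-27843321/32:ℝ)*ξ^10 + (-21562101/2:ℝ)*ξ^10*s^1*u^1 + (445685/2:ℝ)*ξ^10*s^2 + (-468439013/4:ℝ)*ξ^10*s^2*u^2 + (3106305:ℝ)*ξ^10*s^3*u^1 + (-1149809587:ℝ)*ξ^10*s^3*u^3 + (-532089/32:ℝ)*ξ^10*s^4 + (35735991:ℝ)*ξ^10*s^4*u^2 + (-10414183072:ℝ)*ξ^10*s^4*u^4 + (-2360979/8:ℝ)*ξ^10*s^5*u^1 + (358004914:ℝ)*ξ^10*s^5*u^3 + (-88280918624:ℝ)*ξ^10*s^5*u^5 + (-2165869/4:ℝ)*ξ^11 + (-63856743/8:ℝ)*ξ^11*s^1*u^1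 + (457279/4:ℝ)*ξ^11*s^2 + (-199746153/2:ℝ)*ξ^11*s^2*u^2 + (2035638:ℝ)*ξ^11*s^3*u^1 + (-1105141949:ℝ)*ξ^11*s^3*u^3 + (-96687/16:ℝ)*ξ^11*s^4 + (28305510:ℝ)*ξ^11*s^4*u^2 + (-11105821504:ℝ)*ξ^11*s^4*u^4 + (-1256175/8:ℝ)*ξ^11*s^5*u^1 + (331207152:ℝ)*ξ^11*s^5*u^3 + (-103227488128:ℝ)*ξ^11*s^5*u^5 + (-8931565/32:ℝ)*ξ^12 + (-80360355/16:ℝ)*ξ^12*s^1*u^1 + (2924703/64:ℝ)*ξ^12*s^2 + (-294322245/4:ℝ)*ξ^12*s^2*u^2 + (17372127/16:ℝ)*ξ^12*s^3*u^1 + (-1856068115/2:ℝ)*ξ^12*s^3*u^3 + (-98163/64:ℝ)*ξ^12*s^4 + (74792775/4:ℝ)*ξ^12*s^4*u^2 + (-10432323200:ℝ)*ξ^12*s^4*u^4 + (-127125/2:ℝ)*ξ^12*s^5*u^1 + (259486797:ℝ)*ξ^12*s^5*u^3 + (-106980944960:ℝ)*ξ^12*s^5*u^5 + (-3760699/32:ℝ)*ξ^13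 + (-5338935/2:ℝ)*ξ^13*s^1*u^1 + (442487/32:ℝ)*ξ^13*s^2 + (-93464289/2:ℝ)*ξ^13*s^2*u^2 + (7467909/16:ℝ)*ξ^13*s^3*u^1 + (-680996976:ℝ)*ξ^13*s^3*u^3 + (-15813/64:ℝ)*ξ^13*s^4 + (10281285:ℝ)*ξ^13*s^4*u^2 + (-8646408032:ℝ)*ξ^13*s^4*u^4 + (-153675/8:ℝ)*ξ^13*s^5*u^1 + (172528935:ℝ)*ξ^13*s^5*u^3 + (-98526567936:ℝ)*ξ^13*s^5*u^5 + (-10123395/256:ℝ)*ξ^14 + (-75935247/64:ℝ)*ξ^14*s^1*u^1 + (192197/64:ℝ)*ξ^14*s^2 + (-407501877/16:ℝ)*ξ^14*s^2*u^2 + (5079045/32:ℝ)*ξ^14*s^3*u^1 + (-1743860679/4:ℝ)*ξ^14*s^3*u^3 + (-4977/256:ℝ)*ξ^14*s^4 + (18693495/4:ℝ)*ξ^14*s^4*u^2 + (-6323916698:ℝ)*ξ^14*s^4*u^4 + (-264555/64:ℝ)*ξ^14*s^5*u^1 + (194430045/2:ℝ)*ξ^14*s^5*u^3 + (-80745945320:ℝ)*ξ^14*s^5*u^5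 + (-1314839/128:ℝ)*ξ^15 + (-27795869/64:ℝ)*ξ^15*s^1*u^1 + (13475/32:ℝ)*ξ^15*s^2 + (-47288519/4:ℝ)*ξ^15*s^2*u^2 + (330817/8:ℝ)*ξ^15*s^3*u^1 + (-970513109/4:ℝ)*ξ^15*s^3*u^3 + (6935111/4:ℝ)*ξ^15*s^4*u^2 + (-4076367740:ℝ)*ξ^15*s^4*u^4 + (-36603/64:ℝ)*ξ^15*s^5*u^1 + (46191176:ℝ)*ξ^15*s^5*u^3 + (-58893953816:ℝ)*ξ^15*s^5*u^5 + (-497683/256:ℝ)*ξ^16 + (-16378117/128:ℝ)*ξ^16*s^1*u^1 + (3719/128:ℝ)*ξ^16*s^2 + (-73952551/16:ℝ)*ξ^16*s^2*u^2 + (31227/4:ℝ)*ξ^16*s^3*u^1 + (-933715131/8:ℝ)*ξ^16*s^3*u^3 + (8225213/16:ℝ)*ξ^16*s^4*u^2 + (-2309301014:ℝ)*ξ^16*s^4*u^4 + (-4977/128:ℝ)*ξ^16*s^5*u^1 + (73352647/4:ℝ)*ξ^16*s^5*u^3 + (-38190508412:ℝ)*ξ^16*s^5*u^5 + (-1921/8:ℝ)*ξ^17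 + (-936997/32:ℝ)*ξ^17*s^1*u^1 + (-23960987/16:ℝ)*ξ^17*s^2*u^2 + (30669/32:ℝ)*ξ^17*s^3*u^1 + (-48122644:ℝ)*ξ^17*s^3*u^3 + (942119/8:ℝ)*ξ^17*s^4*u^2 + (-1144604696:ℝ)*ξ^17*s^4*u^4 + (23979673/4:ℝ)*ξ^17*s^5*u^3 + (-21968358320:ℝ)*ξ^17*s^5*u^5 + (-3757/256:ℝ)*ξ^18 + (-628141/128:ℝ)*ξ^18*s^1*u^1 + (-25130375/64:ℝ)*ξ^18*s^2*u^2 + (3719/64:ℝ)*ξ^18*s^3*u^1 + (-268879425/16:ℝ)*ξ^18*s^3*u^3 + (314873/16:ℝ)*ξ^18*s^4*u^2 + (-493139215:ℝ)*ξ^18*s^4*u^4 + (12623435/8:ℝ)*ξ^18*s^5*u^3 + (-11169577672:ℝ)*ξ^18*s^5*u^5 + (-34493/64:ℝ)*ξ^19*s^1*u^1 + (-2571121/32:ℝ)*ξ^19*s^2*u^2 + (-78194591/16:ℝ)*ξ^19*s^3*u^3 + (8597/4:ℝ)*ξ^19*s^4*u^2 + (-183013792:ℝ)*ξ^19*s^4*u^4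 + (322845:ℝ)*ξ^19*s^5*u^3 + (-4993821420:ℝ)*ξ^19*s^5*u^5 + (-3757/128:ℝ)*ξ^20*s^1*u^1 + (-773627/64:ℝ)*ξ^20*s^2*u^2 + (-36962113/32:ℝ)*ξ^20*s^3*u^3 + (3719/32:ℝ)*ξ^20*s^4*u^2 + (-57778840:ℝ)*ξ^20*s^4*u^4 + (48421:ℝ)*ξ^20*s^5*u^3 + (-1949448958:ℝ)*ξ^20*s^5*u^5 + (-19125/16:ℝ)*ξ^21*s^2*u^2 + (-213828:ℝ)*ξ^21*s^3*u^3 + (-15249900:ℝ)*ξ^21*s^4*u^4 + (38107/8:ℝ)*ξ^21*s^5*u^3 + (-658142544:ℝ)*ξ^21*s^5*u^5 + (-3757/64:ℝ)*ξ^22*s^2*u^2 + (-934141/32:ℝ)*ξ^22*s^3*u^3 + (-52515387/16:ℝ)*ξ^22*s^4*u^4 + (3719/16:ℝ)*ξ^22*s^5*u^3 + (-758744507/4:ℝ)*ξ^22*s^5*u^5 + (-42007/16:ℝ)*ξ^23*s^3*u^3 + (-4439403/8:ℝ)*ξ^23*s^4*u^4 + (-183393393/4:ℝ)*ξ^23*s^5*u^5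 + (-3757/32:ℝ)*ξ^24*s^3*u^3 + (-1109683/16:ℝ)*ξ^24*s^4*u^4 + (-72492365/8:ℝ)*ξ^24*s^5*u^5 + (-11441/2:ℝ)*ξ^25*s^4*u^4 + (-2820307/2:ℝ)*ξ^25*s^5*u^5 + (-3757/16:ℝ)*ξ^26*s^4*u^4 + (-1300253/8:ℝ)*ξ^26*s^5*u^5 + (-49521/4:ℝ)*ξ^27*s^5*u^5 + (-3757/8:ℝ)*ξ^28*s^5*u^5) * hu
  exact (mul_eq_zero.mp key).resolve_left (pow_ne_zero 6 hd)
end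

section
/- Let σ ∈ (0,1] and ξ > 0, and set z = −ξ. Define x_DAR(z) = −1/2 + (2σ²(1−z) + z + (z−1)²(z−2σ²))/(2·√(z²−4σ²(z−1))·(1+(z−1)²)) and y_DAR(z) = σ + σ²(z−2)(2−z)²/(2(1+(z−1)²)·√(z²−4σ²(z−1))), and define x_6V(ξ) = 1/2 + (2σ²ξ(ξ+1) + ξ(2+ξ(2+ξ)))/(2(2+ξ(2+ξ))·√(ξ²+4σ²(1+ξ))) and y_6V(ξ) = σ − σ²(2+ξ)³/(2(2+ξ(2+ξ))·√(ξ²+4σ²(1+ξ))). Then x_DAR(−ξ) = −x_6V(ξ) and y_DAR(−ξ) = y_6V(ξ). -/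
/-- Under the change of variables `z = −ξ`, `x → −x`, the arctic curve of domino tilings
of the double Aztec rectangle (with `κ = 0`, `σ₁ = σ₂ = σ`, `β = 1`) coincides with the
arctic curve of the 6V model with pDWBC at the free-fermion point with weights
`a = b = 1`, `c = √2`. -/
theorem DAR_arctic_curve_matches_6V (σ ξ z : ℝ)
    (hσ0 : 0 < σ) (hσ1 : σ ≤ 1) (hξ : 0 < ξ) (hz : z = -ξ) :
    (-1 / 2 + (2 * σ ^ 2 * (1 - z) + z + (z - 1) ^ 2 * (z - 2 * σ ^ 2)) /
        (2 * Real.sqrt (z ^ 2 - 4 * σ ^ 2 * (z - 1)) * (1 + (z - 1) ^ 2))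
      = -(1 / 2 + (2 * σ ^ 2 * ξ * (ξ + 1) + ξ * (2 + ξ * (2 + ξ))) /
          (2 * (2 + ξ * (2 + ξ)) * Real.sqrt (ξ ^ 2 + 4 * σ ^ 2 * (1 + ξ))))) ∧
    (σ + σ ^ 2 * (z - 2) * (2 - z) ^ 2 /
        (2 * (1 + (z - 1) ^ 2) * Real.sqrt (z ^ 2 - 4 * σ ^ 2 * (z - 1)))
      = σ - σ ^ 2 * (2 + ξ) ^ 3 /
          (2 * (2 + ξ * (2 + ξ)) * Real.sqrt (ξ ^ 2 + 4 * σ ^ 2 * (1 + ξ)))) := by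
  subst hz
  have harg : (-ξ) ^ 2 - 4 * σ ^ 2 * (-ξ - 1) = ξ ^ 2 + 4 * σ ^ 2 * (1 + ξ) := by ring
  rw [harg]
  set s := Real.sqrt (ξ ^ 2 + 4 * σ ^ 2 * (1 + ξ)) with hs
  have hpos : 0 < ξ ^ 2 + 4 * σ ^ 2 * (1 + ξ) := by positivity
  have hspos : 0 < s := Real.sqrt_pos.mpr hpos
  have hs2 : s ^ 2 = ξ ^ 2 + 4 * σ ^ 2 * (1 + ξ) := Real.sq_sqrt hpos.le
  have hden : (0:ℝ) < 2 + ξ * (2 + ξ) := by nlinarith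
  have hden2 : (0:ℝ) < 1 + (-ξ - 1) ^ 2 := by positivity
  constructor
  · field_simp
    nlinarith [hs2, hspos, sq_nonneg s]
  · field_simp
    nlinarith [hs2, hspos]
end

section
/- Let β > 0 and let z be any real number with 1 ≤ z ≤ 2. Define x = −β²(z−1)²/(1+β²(z−1)²) and y = β²z²/((1+β²)(1+β²(z−1)²)). Then β⁴·(1+x−y)² + (x+y)² + 2β²·(x + x² + y² − y) = 0. -/
/-- For `1 ≤ z ≤ 2`, the tangent-method parametrization of the arctic curve of the double
Aztec rectangle with `κ = 0`, `σ₁ = σ₂ = 1` and vertical-domino weight `β` lies on the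
ellipse `β⁴(1+x−y)² + (x+y)² + 2β²(x+x²+y²−y) = 0`. -/
theorem DAR_ellipse_lower (β z : ℝ) (hβ : 0 < β) (hz1 : 1 ≤ z) (hz2 : z ≤ 2) (x y : ℝ)
    (hx : x = -(β ^ 2 * (z - 1) ^ 2) / (1 + β ^ 2 * (z - 1) ^ 2))
    (hy : y = β ^ 2 * z ^ 2 / ((1 + β ^ 2) * (1 + β ^ 2 * (z - 1) ^ 2))) :
    β ^ 4 * (1 + x - y) ^ 2 + (x + y) ^ 2 +
      2 * β ^ 2 * (x + x ^ 2 + y ^ 2 - y) = 0 := by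
  have hd : (0:ℝ) < 1 + β ^ 2 * (z - 1) ^ 2 := by positivity
  have he : (0:ℝ) < 1 + β ^ 2 := by positivity
  set d : ℝ := 1 + β ^ 2 * (z - 1) ^ 2 with hdd
  set e : ℝ := 1 + β ^ 2 with hee
  have hed : e * d ≠ 0 := by positivity
  have hX : e * d * x = -(β ^ 2 * (z - 1) ^ 2) * e := by
    rw [hx]; field_simp
  have hY : e * d * y = β ^ 2 * z ^ 2 := by
    rw [hy]; field_simp
  have key : (e * d) ^ 2 *
      (β ^ 4 * (1 + x - y) ^ 2 + (x + y) ^ 2 +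
        2 * β ^ 2 * (x + x ^ 2 + y ^ 2 - y)) = 0 := by
    have h2 : (e * d) ^ 2 *
        (β ^ 4 * (1 + x - y) ^ 2 + (x + y) ^ 2 +
          2 * β ^ 2 * (x + x ^ 2 + y ^ 2 - y)) =
        β ^ 4 * (e * d + e * d * x - e * d * y) ^ 2 + (e * d * x + e * d * y) ^ 2 +
          2 * β ^ 2 * (e * d * (e * d * x) + (e * d * x) ^ 2 + (e * d * y) ^ 2
            - e * d * (e * d * y)) := by ring
    rw [h2, hX, hY, hdd, hee]; ring
  have := mul_eq_zero.mp key
  rcases this with h | h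
  · exact absurd h (pow_ne_zero 2 hed)
  · exact h
end

section
/- Let β > 0 and let z be any real number with z ≥ 2. Define x = −1/(1+β²(z−1)²) and y = (2 + β²(z−2)² + 2β⁴(z−1)²)/((1+β²)(1+β²(z−1)²)). Then β⁴·(2+x−y)² + (−1+x+y)² + 2β²·(2 + x + x² + y² − 3y) = 0. -/
/-- For `z ≥ 2`, the tangent-method parametrization of the arctic curve of the double
Aztec rectangle with `κ = 0`, `σ₁ = σ₂ = 1` and vertical-domino weight `β` lies on the
ellipse `β⁴(2+x−y)² + (−1+x+y)² + 2β²(2+x+x²+y²−3y) = 0`. -/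
theorem DAR_ellipse_upper (β z : ℝ) (hβ : 0 < β) (hz : 2 ≤ z) (x y : ℝ)
    (hx : x = -1 / (1 + β ^ 2 * (z - 1) ^ 2))
    (hy : y = (2 + β ^ 2 * (z - 2) ^ 2 + 2 * β ^ 4 * (z - 1) ^ 2) /
      ((1 + β ^ 2) * (1 + β ^ 2 * (z - 1) ^ 2))) :
    β ^ 4 * (2 + x - y) ^ 2 + (-1 + x + y) ^ 2 +
      2 * β ^ 2 * (2 + x + x ^ 2 + y ^ 2 - 3 * y) = 0 := by
  have h1 : (1 + β ^ 2 * (z - 1) ^ 2) ≠ 0 := by positivity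
  have h2 : (1 + β ^ 2) ≠ 0 := by positivity
  subst hx hy
  field_simp
  ring
end
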